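/- arXiv:2312.03688 — 4 statements merged into one kernel-verified Lean document; each statement's English description precedes it below -/
import Mathlib

section
/- If G is a graph and a, b are positive integers with a ≥ b and a/b ≥ (1/2)·mad(G), then there exist spanning subgraphs G₁,…,G_a of G, each of which admits an orientation with maximum outdegree at most one, such that each edge of G belongs to at least b of them. -/
noncomputable section

namespace TwwPaper

open Finset

variable {V : Type*}

/-- The number of edges of `G` with both endpoints in `X`. -/
def edgesIn (G : SimpleGraph V) (X : Finset V) : ℕ :=
  Nat.card {e : Sym2 V // e ∈ G.edgeSet ∧ ∀ v ∈ e, v ∈ X}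

/-- The number of edges of `G`. -/
def edgeCount (G : SimpleGraph V) : ℕ := Nat.card G.edgeSet

/-- The maximum average degree of `G`: the maximum over nonempty vertex subsets `X`
of `2 e(G[X]) / |X|`. -/
def mad [Fintype V] (G : SimpleGraph V) : ℝ :=
  ⨆ X : {X : Finset V // X.Nonempty}, (2 * edgesIn G X.1 : ℝ) / X.1.card

/-- The degree of a vertex. -/
def deg (G : SimpleGraph V) (v : V) : ℕ := Nat.card (G.neighborSet v)

/-- The maximum degree `Δ(G)`. -/
def maxDeg [Fintype V] (G : SimpleGraph V) : ℕ := univ.sup (deg G)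

/-- `G` is `d`-regular. -/
def IsReg (G : SimpleGraph V) (d : ℕ) : Prop := ∀ v, deg G v = d

/-- `G` admits an orientation with maximum outdegree at most one:
an assignment of a tail (source) vertex to each edge, no vertex being
the tail of two distinct edges. -/
def HasOrientationOutdegLEOne (G : SimpleGraph V) : Prop :=
  ∃ f : G.edgeSet → V, (∀ e : G.edgeSet, f e ∈ (e : Sym2 V)) ∧ Function.Injective f

/-- Two lists (sequences) of the same length `r` are close if they contain a common
subsequence of length `r - 1`, obtained by deleting one entry from each. -/
def Close {S : Type*} (L M : List S) : Prop :=
  ∃ i < L.length, ∃ j < M.length, L.eraseIdx i = M.eraseIdx j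

section Partitions

variable [Fintype V] [DecidableEq V]

/-- `Q` is obtained from `P` by merging the two distinct parts `A` and `B`. -/
def IsMergeStep (P Q : Finpartition (univ : Finset V)) : Prop :=
  ∃ A ∈ P.parts, ∃ B ∈ P.parts, A ≠ B ∧
    Q.parts = insert (A ∪ B) ((P.parts.erase A).erase B)

/-- Degree of the part `A` in the quotient graph `G / P`. -/
def quotDeg (G : SimpleGraph V) (P : Finpartition (univ : Finset V)) (A : Finset V) : ℕ :=
  Nat.card {B : Finset V // B ∈ P.parts ∧ B ≠ A ∧ ∃ u ∈ A, ∃ v ∈ B, G.Adj u v}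

/-- Red degree of the part `A` with respect to the partition `P`: the number of other
parts `B` which are neither fully adjacent nor fully non-adjacent to `A`. -/
def redDeg (G : SimpleGraph V) (P : Finpartition (univ : Finset V)) (A : Finset V) : ℕ :=
  Nat.card {B : Finset V // B ∈ P.parts ∧ B ≠ A ∧ (∃ u ∈ A, ∃ v ∈ B, G.Adj u v) ∧
    ¬ (∀ u ∈ A, ∀ v ∈ B, G.Adj u v)}

/-- There is a sequence of partitions of `V(G)`, starting at the discrete partition,
ending with at most one part, each obtained from the previous one by merging two parts,
such that every part of every intermediate partition has `degFn`-degree at most `w`. -/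
def SeqOK (G : SimpleGraph V)
    (degFn : SimpleGraph V → Finpartition (univ : Finset V) → Finset V → ℕ) (w : ℕ) : Prop :=
  ∃ n : ℕ, ∃ P : Fin (n + 1) → Finpartition (univ : Finset V),
    (∀ A ∈ (P 0).parts, A.card = 1) ∧
    (P (Fin.last n)).parts.card ≤ 1 ∧
    (∀ i : Fin n, IsMergeStep (P i.castSucc) (P i.succ)) ∧
    (∀ i, ∀ A ∈ (P i).parts, degFn G (P i) A ≤ w)

/-- The sparse twin-width of `G`: the least `w` such that `G` can be contracted to a
single vertex by iterated pairwise identifications with all intermediate (quotient)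
graphs of maximum degree at most `w`. -/
def stww (G : SimpleGraph V) : ℕ := sInf {w | SeqOK G quotDeg w}

/-- The twin-width of `G`, via contraction sequences minimizing the maximum red degree. -/
def tww (G : SimpleGraph V) : ℕ := sInf {w | SeqOK G redDeg w}

/-- The quotient graph `G / P`: parts of `P` are adjacent iff some edge of `G` joins them. -/
def quotGraph (G : SimpleGraph V) (P : Finpartition (univ : Finset V)) :
    SimpleGraph {A : Finset V // A ∈ P.parts} :=
  SimpleGraph.fromRel (fun A B => ∃ u ∈ A.1, ∃ v ∈ B.1, G.Adj u v)

end Partitions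

/-- A graph is `w`-degenerate if every nonempty (induced) subgraph has a vertex of
degree at most `w` in it. -/
def Degenerate {W : Type*} (w : ℕ) (H : SimpleGraph W) : Prop :=
  ∀ s : Finset W, s.Nonempty → ∃ a ∈ s, Nat.card {b : W // b ∈ s ∧ H.Adj a b} ≤ w

/-- The graph `Π(r₁,…,r_a; b, q)`: vertices are tuples `(v₁,…,v_a)` with `vᵢ ∈ [q]^{rᵢ}`,
two tuples being adjacent iff (they are distinct and) at least `b` coordinates are
pairwise equal or close. -/
def PiGraph (a b q : ℕ) (rfn : Fin a → ℕ) : SimpleGraph (∀ i : Fin a, Fin (rfn i) → Fin q) :=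
  SimpleGraph.fromRel (fun u v => ∃ I : Finset (Fin a), I.card = b ∧
    ∀ i ∈ I, u i = v i ∨ Close (List.ofFn (u i)) (List.ofFn (v i)))

/-!
Take `b` parallel copies of every edge of `G`. The hypothesis `b · mad(G) ≤ 2a` says that the
copies spanned by any vertex set `X` number at most `a · |X|`, which is Hall's condition for
choosing a tail for every copy so that no vertex is the tail of more than `a` copies. Tails and
edges are the two sides of a bipartite multigraph whose edges are the copies; it has maximum degree
at most `a` (an edge has `b ≤ a` copies), so by König's theorem it has a proper `a`-edge-colouring.
In each colour class every vertex is the tail of at most one copy, which orients the class with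
outdegree at most one, and the `b` copies of an edge get `b` distinct colours.

König's theorem is proved in the usual way: pad the multigraph to a regular one and peel off
perfect matchings, which exist by Hall's theorem.
-/

lemma card_filter_fst_eq {α β : Type*} [Fintype α] [Fintype β] [DecidableEq α] (x : α) :
    #{p : α × β | p.1 = x} = Fintype.card β := by
  have h : ({p : α × β | p.1 = x} : Finset _) = {x} ×ˢ univ := by
    ext ⟨y, z⟩; simp [eq_comm]
  simp [h]

lemma exists_forall_mem_card_fiber_le {ι α : Type*} [Fintype ι] [DecidableEq α]
    (T : ι → Finset α) (a : ℕ) (h : ∀ s : Finset ι, #s ≤ a * #(s.biUnion T)) :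
    ∃ f : ι → α, (∀ i, f i ∈ T i) ∧ ∀ x, #{i | f i = x} ≤ a := by
  have hall : ∀ s : Finset ι, #s ≤ #(s.biUnion fun i => T i ×ˢ (univ : Finset (Fin a))) := by
    intro s
    have hprod : (s.biUnion fun i => T i ×ˢ (univ : Finset (Fin a))) = s.biUnion T ×ˢ univ := by
      ext; simp
    rw [hprod, card_product, card_univ, Fintype.card_fin, mul_comm]
    exact h s
  obtain ⟨g, hg, hgT⟩ := (all_card_le_biUnion_card_iff_exists_injective _).1 hall
  refine ⟨fun i => (g i).1, fun i => (mem_product.1 (hgT i)).1, fun x => ?_⟩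
  calc #{i | (g i).1 = x} ≤ #(univ : Finset (Fin a)) :=
        card_le_card_of_injOn (fun i => (g i).2) (fun _ _ => mem_univ _)
          fun i hi j hj hij => hg (Prod.ext (by simp_all) hij)
    _ = a := by simp

section EdgeColoring

variable {C ι L R : Type*}

lemma card_filter_image_eq_one [Fintype L] [DecidableEq C] [DecidableEq ι] {m : L → C}
    {f : C → ι} (hf : Function.Bijective (f ∘ m)) (z : ι) :
    #{c ∈ univ.image m | f c = z} = 1 := by
  obtain ⟨x, rfl⟩ := hf.2 z
  refine card_eq_one.2 ⟨m x, ?_⟩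
  ext c
  simp only [mem_filter, mem_image, mem_univ, true_and, mem_singleton]
  constructor
  · rintro ⟨⟨x', rfl⟩, h⟩
    rw [hf.1 h]
  · rintro rfl
    exact ⟨⟨x, rfl⟩, rfl⟩

lemma card_filter_mem_eq_mul [DecidableEq ι] {S : Finset C} {f : C → ι} {k : ℕ}
    (hf : ∀ z, #{c ∈ S | f c = z} = k) (s : Finset ι) : #{c ∈ S | f c ∈ s} = k * #s := by
  rw [← sum_card_fiberwise_eq_card_filter, sum_const_nat fun z _ => hf z, mul_comm]

lemma exists_perfect_matching_of_regular [Fintype L] [Fintype R] [DecidableEq C]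
    [DecidableEq L] [DecidableEq R] (fL : C → L) (fR : C → R) {S : Finset C} {k : ℕ}
    (hk : 0 < k) (hL : ∀ x, #{c ∈ S | fL c = x} = k) (hR : ∀ y, #{c ∈ S | fR c = y} = k) :
    ∃ M ⊆ S, (∀ x, #{c ∈ M | fL c = x} = 1) ∧ ∀ y, #{c ∈ M | fR c = y} = 1 := by
  set T : L → Finset R := fun x => image fR {c ∈ S | fL c = x}
  have hall : ∀ s : Finset L, #s ≤ #(s.biUnion T) := by
    intro s
    refine Nat.le_of_mul_le_mul_left ?_ hk
    rw [← card_filter_mem_eq_mul hL, ← card_filter_mem_eq_mul hR]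
    refine card_le_card fun c hc => ?_
    simp only [mem_filter] at hc ⊢
    exact ⟨hc.1, mem_biUnion.2 ⟨fL c, hc.2, mem_image_of_mem _ (mem_filter.2 ⟨hc.1, rfl⟩)⟩⟩
  obtain ⟨g, hg, hgT⟩ := (all_card_le_biUnion_card_iff_exists_injective T).1 hall
  have hm : ∀ x, ∃ c ∈ S, fL c = x ∧ fR c = g x := by
    intro x
    obtain ⟨c, hc, hcg⟩ := mem_image.1 (hgT x)
    exact ⟨c, (mem_filter.1 hc).1, (mem_filter.1 hc).2, hcg⟩
  choose m hmS hmL hmR using hm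
  have hcard : Fintype.card L = Fintype.card R := by
    have hLS := card_filter_mem_eq_mul hL univ
    have hRS := card_filter_mem_eq_mul hR univ
    simp only [mem_univ, filter_true, card_univ] at hLS hRS
    exact Nat.eq_of_mul_eq_mul_left hk (hLS.symm.trans hRS)
  have hg' : Function.Bijective (fR ∘ m) := by
    rw [show fR ∘ m = g from funext hmR]
    exact (Fintype.bijective_iff_injective_and_card g).2 ⟨hg, hcard⟩
  have hmL' : Function.Bijective (fL ∘ m) := by
    rw [show fL ∘ m = id from funext hmL]
    exact Function.bijective_id
  refine ⟨univ.image m, fun c hc => ?_, card_filter_image_eq_one hmL',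
    card_filter_image_eq_one hg'⟩
  obtain ⟨x, -, rfl⟩ := mem_image.1 hc
  exact hmS x

lemma injOn_prodMk_ite [DecidableEq C] [DecidableEq ι] {f : C → ι} {χ : C → ℕ}
    {M S : Finset C} {k : ℕ}
    (hM : ∀ z, #{c ∈ M | f c = z} ≤ 1) (hlt : ∀ c ∈ S \ M, χ c < k)
    (hχ : Set.InjOn (fun c => (f c, χ c)) ↑(S \ M)) :
    Set.InjOn (fun c => (f c, if c ∈ M then k else χ c)) ↑S := by
  intro c hc c' hc' h
  simp only [Prod.mk.injEq] at h
  obtain ⟨hf, hχc⟩ := h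
  have hcS : c ∈ S := mem_coe.1 hc
  have hc'S : c' ∈ S := mem_coe.1 hc'
  by_cases hcM : c ∈ M <;> by_cases hc'M : c' ∈ M <;>
    simp only [hcM, hc'M, if_true, if_false] at hχc
  · exact card_le_one.1 (hM (f c)) c (mem_filter.2 ⟨hcM, rfl⟩) c' (by simp [hc'M, hf])
  · exact absurd (hlt c' (mem_sdiff.2 ⟨hc'S, hc'M⟩)) (by omega)
  · exact absurd (hlt c (mem_sdiff.2 ⟨hcS, hcM⟩)) (by omega)
  · exact hχ (mem_sdiff.2 ⟨hcS, hcM⟩) (mem_sdiff.2 ⟨hc'S, hc'M⟩) (Prod.ext hf hχc)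

lemma card_filter_sdiff_of_subset [DecidableEq C] {S M : Finset C} (hMS : M ⊆ S) (p : C → Prop)
    [DecidablePred p] : #{c ∈ S \ M | p c} = #{c ∈ S | p c} - #{c ∈ M | p c} := by
  have h : {c ∈ S \ M | p c} = {c ∈ S | p c} \ {c ∈ M | p c} := by
    ext c; simp only [mem_filter, mem_sdiff]; tauto
  rw [h, card_sdiff_of_subset (filter_subset_filter _ hMS)]

-- The colours are natural numbers below `k`: for `k = 0` there is no map `C → Fin k`.
lemma exists_coloring_of_regular [Fintype L] [Fintype R] [DecidableEq C]
    [DecidableEq L] [DecidableEq R] (fL : C → L) (fR : C → R) (k : ℕ) (S : Finset C)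
    (hL : ∀ x, #{c ∈ S | fL c = x} = k) (hR : ∀ y, #{c ∈ S | fR c = y} = k) :
    ∃ χ : C → ℕ, (∀ c ∈ S, χ c < k) ∧
      Set.InjOn (fun c => (fL c, χ c)) ↑S ∧ Set.InjOn (fun c => (fR c, χ c)) ↑S := by
  induction k generalizing S with
  | zero =>
    have hS : S = ∅ := by
      refine eq_empty_of_forall_notMem fun c hc => ?_
      have h := hL (fL c)
      rw [card_eq_zero] at h
      exact (eq_empty_iff_forall_notMem.1 h) c (mem_filter.2 ⟨hc, rfl⟩)
    subst hS
    exact ⟨0, by simp, by simp, by simp⟩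
  | succ k ih =>
    obtain ⟨M, hMS, hML, hMR⟩ := exists_perfect_matching_of_regular fL fR k.succ_pos hL hR
    have hrestL : ∀ x, #{c ∈ S \ M | fL c = x} = k := fun x => by
      rw [card_filter_sdiff_of_subset hMS, hL, hML]; rfl
    have hrestR : ∀ y, #{c ∈ S \ M | fR c = y} = k := fun y => by
      rw [card_filter_sdiff_of_subset hMS, hR, hMR]; rfl
    obtain ⟨χ, hlt, hχL, hχR⟩ := ih (S \ M) hrestL hrestR
    refine ⟨fun c => if c ∈ M then k else χ c, fun c hc => ?_,
      injOn_prodMk_ite (fun z => (hML z).le) hlt hχL,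
      injOn_prodMk_ite (fun z => (hMR z).le) hlt hχR⟩
    by_cases hcM : c ∈ M
    · simp [hcM]
    · simpa [hcM] using (hlt c (mem_sdiff.2 ⟨hc, hcM⟩)).trans k.lt_succ_self

lemma exists_coloring_of_card_fiber_le [Fintype C] [Fintype L] [Fintype R] [DecidableEq C]
    [DecidableEq L] [DecidableEq R] (fL : C → L) (fR : C → R) {k : ℕ}
    (hL : ∀ x, #{c | fL c = x} ≤ k) (hR : ∀ y, #{c | fR c = y} ≤ k) :
    ∃ χ : C → Fin k, Function.Injective (fun c => (fL c, χ c)) ∧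
      Function.Injective (fun c => (fR c, χ c)) := by
  -- Two copies of the multigraph, the second with its sides swapped, joined by `k - d(v)` parallel
  -- edges between the two copies of each vertex `v`, form a `k`-regular bipartite multigraph.
  let dL x := #{c | fL c = x}
  let dR y := #{c | fR c = y}
  let S : Finset ((C ⊕ C) ⊕ ((_ : L) × ℕ) ⊕ ((_ : R) × ℕ)) :=
    (univ.disjSum univ).disjSum
      ((univ.sigma fun x => range (k - dL x)).disjSum (univ.sigma fun y => range (k - dR y)))
  let fL' : (C ⊕ C) ⊕ ((_ : L) × ℕ) ⊕ ((_ : R) × ℕ) → L ⊕ R :=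
    Sum.elim (Sum.elim (Sum.inl ∘ fL) (Sum.inr ∘ fR))
      (Sum.elim (Sum.inl ∘ Sigma.fst) (Sum.inr ∘ Sigma.fst))
  let fR' : (C ⊕ C) ⊕ ((_ : L) × ℕ) ⊕ ((_ : R) × ℕ) → R ⊕ L :=
    Sum.elim (Sum.elim (Sum.inl ∘ fR) (Sum.inr ∘ fL))
      (Sum.elim (Sum.inr ∘ Sigma.fst) (Sum.inl ∘ Sigma.fst))
  have hL' : ∀ z, #{c ∈ S | fL' c = z} = k := by
    rintro (x | y) <;>
    · rw [card_filter, sum_disjSum, sum_disjSum, sum_disjSum, sum_sigma, sum_sigma]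
      simp [fL', dL, dR, add_tsub_cancel_of_le, hL, hR]
  have hR' : ∀ z, #{c ∈ S | fR' c = z} = k := by
    rintro (y | x) <;>
    · rw [card_filter, sum_disjSum, sum_disjSum, sum_disjSum, sum_sigma, sum_sigma]
      simp [fR', dL, dR, add_tsub_cancel_of_le, hL, hR]
  obtain ⟨χ, hlt, hχL, hχR⟩ := exists_coloring_of_regular fL' fR' k S hL' hR'
  have hS : ∀ c, Sum.inl (Sum.inl c) ∈ S := by simp [S]
  refine ⟨fun c => ⟨χ (Sum.inl (Sum.inl c)), hlt _ (hS c)⟩, fun c c' h => ?_, fun c c' h => ?_⟩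
  · simp only [Prod.mk.injEq, Fin.mk.injEq] at h
    simpa using hχL (hS c) (hS c') (by simp [fL', h.1, h.2])
  · simp only [Prod.mk.injEq, Fin.mk.injEq] at h
    simpa using hχR (hS c) (hS c') (by simp [fR', h.1, h.2])

end EdgeColoring

section Graph

lemma hasOrientationOutdegLEOne_of_injective {ι : Type*} {H : SimpleGraph V} (e : ι → Sym2 V)
    (t : ι → V) (het : ∀ i, t i ∈ e i) (ht : Function.Injective t)
    (hH : H.edgeSet ⊆ Set.range e) : HasOrientationOutdegLEOne H := by
  choose i hi using fun s : H.edgeSet => hH s.2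
  refine ⟨fun s => t (i s), fun s => hi s ▸ het (i s), fun s s' h => Subtype.ext ?_⟩
  rw [← hi s, ← hi s', ht h]

lemma exists_subgraphs_of_tail_coloring (G : SimpleGraph V) {ι : Type*} {a : ℕ}
    (E : ι → G.edgeSet) (t : ι → V) (χ : ι → Fin a) (ht : ∀ p, t p ∈ (E p : Sym2 V))
    (hχt : Function.Injective fun p => (t p, χ p)) :
    ∃ H : Fin a → SimpleGraph V, (∀ i, H i ≤ G ∧ HasOrientationOutdegLEOne (H i)) ∧
      ∀ p, (E p : Sym2 V) ∈ (H (χ p)).edgeSet := by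
  let F (i : Fin a) : Set (Sym2 V) := Set.range fun p : {p // χ p = i} => (E p : Sym2 V)
  have hF : ∀ i, (SimpleGraph.fromEdgeSet (F i)).edgeSet = F i := fun i => by
    rw [SimpleGraph.edgeSet_fromEdgeSet, sdiff_eq_left, Set.disjoint_left]
    rintro _ ⟨p, rfl⟩
    exact G.not_isDiag_of_mem_edgeSet (E p).2
  refine ⟨fun i => SimpleGraph.fromEdgeSet (F i), fun i => ⟨?_, ?_⟩, fun p => ?_⟩
  · rw [← SimpleGraph.edgeSet_subset_edgeSet, hF]
    rintro _ ⟨p, rfl⟩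
    exact (E p).2
  · refine hasOrientationOutdegLEOne_of_injective (fun p : {p // χ p = i} => (E p : Sym2 V))
      (fun p => t p) (fun p => ht p) (fun p q h => Subtype.ext (hχt ?_)) (hF i).subset
    simp only [Prod.mk.injEq]
    exact ⟨h, p.2.trans q.2.symm⟩
  · rw [hF]
    exact ⟨⟨p, rfl⟩, rfl⟩

variable [Fintype V] (G : SimpleGraph V)

lemma div_card_le_mad {X : Finset V} (hX : X.Nonempty) : (2 * edgesIn G X : ℝ) / #X ≤ mad G :=
  le_ciSup (f := fun X : {X : Finset V // X.Nonempty} => (2 * edgesIn G X.1 : ℝ) / #X.1)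
    (Set.finite_range _).bddAbove ⟨X, hX⟩

lemma mul_edgesIn_le_of_mad_le {a b : ℕ} (hb : 0 < b) (hmad : mad G / 2 ≤ a / b) {X : Finset V}
    (hX : X.Nonempty) : b * edgesIn G X ≤ a * #X := by
  have h := div_card_le_mad G hX
  have hX' : (0 : ℝ) < #X := by exact_mod_cast hX.card_pos
  have hb' : (0 : ℝ) < b := by exact_mod_cast hb
  rw [div_le_iff₀ hX'] at h
  rw [le_div_iff₀ hb'] at hmad
  exact_mod_cast (by nlinarith : (b * edgesIn G X : ℝ) ≤ a * #X)

variable [DecidableEq V]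

lemma card_le_edgesIn_biUnion (T : Finset G.edgeSet) :
    #T ≤ edgesIn G (T.biUnion fun e => (e : Sym2 V).toFinset) := by
  rw [← Nat.card_eq_finsetCard]
  refine Nat.card_le_card_of_injective (fun e => ⟨e.1.1, e.1.2, fun v hv =>
    mem_biUnion.2 ⟨e.1, e.2, Sym2.mem_toFinset.2 hv⟩⟩) fun e e' h => ?_
  have h' := congrArg Subtype.val h
  exact Subtype.ext (Subtype.ext h')

variable [DecidableRel G.Adj]

lemma exists_tail_of_mul_edgesIn_le {a b : ℕ}
    (h : ∀ X : Finset V, X.Nonempty → b * edgesIn G X ≤ a * #X) :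
    ∃ t : G.edgeSet × Fin b → V, (∀ p, t p ∈ (p.1 : Sym2 V)) ∧ ∀ v, #{p | t p = v} ≤ a := by
  have hall : ∀ s : Finset (G.edgeSet × Fin b),
      #s ≤ a * #(s.biUnion fun p => (p.1 : Sym2 V).toFinset) := by
    intro s
    rcases s.eq_empty_or_nonempty with rfl | hs
    · simp
    have hX : ((s.image Prod.fst).biUnion fun e => (e : Sym2 V).toFinset).Nonempty := by
      obtain ⟨p, hp⟩ := hs
      exact ⟨_, mem_biUnion.2
        ⟨p.1, mem_image_of_mem _ hp, Sym2.mem_toFinset.2 (Sym2.out_fst_mem _)⟩⟩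
    calc #s ≤ #(s.image Prod.fst ×ˢ (univ : Finset (Fin b))) :=
          card_le_card fun p hp => mem_product.2 ⟨mem_image_of_mem _ hp, mem_univ _⟩
      _ = b * #(s.image Prod.fst) := by simp [mul_comm]
      _ ≤ b * edgesIn G ((s.image Prod.fst).biUnion fun e => (e : Sym2 V).toFinset) :=
          Nat.mul_le_mul_left _ (card_le_edgesIn_biUnion G _)
      _ ≤ a * #((s.image Prod.fst).biUnion fun e => (e : Sym2 V).toFinset) := h _ hX
      _ = a * #(s.biUnion fun p => (p.1 : Sym2 V).toFinset) := by rw [image_biUnion]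
  obtain ⟨t, ht, hfib⟩ := exists_forall_mem_card_fiber_le _ a hall
  exact ⟨t, fun p => Sym2.mem_toFinset.1 (ht p), hfib⟩

end Graph

theorem statement_0 {V : Type*} [Fintype V] (G : SimpleGraph V) (a b : ℕ)
    (hb : 0 < b) (hba : b ≤ a) (hmad : mad G / 2 ≤ (a : ℝ) / b) :
    ∃ H : Fin a → SimpleGraph V,
      (∀ i, H i ≤ G ∧ HasOrientationOutdegLEOne (H i)) ∧
      ∀ e ∈ G.edgeSet, b ≤ Nat.card {i : Fin a // e ∈ (H i).edgeSet} := by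
  classical
  obtain ⟨t, ht_mem, ht_fiber⟩ :=
    exists_tail_of_mul_edgesIn_le G fun X hX => mul_edgesIn_le_of_mad_le G hb hmad hX
  have hfst : ∀ e : G.edgeSet, #{p : G.edgeSet × Fin b | p.1 = e} ≤ a := fun e => by
    rw [card_filter_fst_eq]
    simpa using hba
  obtain ⟨χ, hχt, hχe⟩ := exists_coloring_of_card_fiber_le t Prod.fst ht_fiber hfst
  obtain ⟨H, hH, hmem⟩ := exists_subgraphs_of_tail_coloring G Prod.fst t χ ht_mem hχt
  refine ⟨H, hH, fun e he => ?_⟩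
  calc b = Nat.card (Fin b) := (Nat.card_fin b).symm
    _ ≤ _ := Nat.card_le_card_of_injective (fun j => ⟨_, hmem (⟨e, he⟩, j)⟩) fun j j' h => by
      have h' := @hχe (⟨e, he⟩, j) (⟨e, he⟩, j') (Prod.ext rfl (congrArg Subtype.val h))
      exact (Prod.ext_iff.1 h').2

end TwwPaper
end
end

section
/- Let G be a graph that admits an orientation with maximum outdegree at most one, and let r be a positive integer. Then there exists a set S and a map φ from V(G) to the set of length-r sequences over S with pairwise distinct entries, such that: (1) for every edge uv of G, the sequences φ(u) and φ(v) either are equal or contain a common subsequence of length r−1; and (2) whenever φ(u) and φ(v) share a common element of S, the distance between u and v in G is at most 3r−3. -/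
noncomputable section

namespace TwwPaper

open Finset

variable {V : Type*}

/-!
Let `f` send every vertex to its out-neighbour in an orientation of out-degree at most one, and
every sink to itself, so that the edges of `G` are the pairs `{u, f u}`. The code of `u` lists
`u, f u, …, f^[r-1] u`, except that once this path has entered a cycle of length `< r`, its `k`-th
entry is replaced by the label `(cycle, k - entry time)`. Along an edge `u → f u` the code is then
shifted by one position, or unchanged when `u` itself lies on a short cycle. Its entries are
distinct since a repeated point off the short cycles would close a cycle of length `< r`. A
shared entry means that the two forward paths, each of length at most `r - 1`, end at a common
point or enter a common cycle of length `< r`, which gives a walk of length at most `3r - 3`.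
-/

open Function

lemma Close.symm {S : Type*} {L M : List S} (h : Close L M) : Close M L :=
  let ⟨i, hi, j, hj, h⟩ := h
  ⟨j, hj, i, hi, h.symm⟩

lemma close_map_range_succ {β : Type*} {g h : ℕ → β} (n : ℕ)
    (hgh : ∀ k, g (k + 1) = h k) :
    Close ((List.range (n + 1)).map g) ((List.range (n + 1)).map h) := by
  refine ⟨0, by simp, n, by simp, ?_⟩
  nth_rewrite 2 [List.range_succ]
  rw [List.range_succ_eq_map]
  simp [hgh, List.eraseIdx_append_of_length_le]

section ShortCycleCode

variable {α : Type*} (f : α → α) (r : ℕ)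

def OnShortCycle (x : α) : Prop := 0 < minimalPeriod f x ∧ minimalPeriod f x < r

-- Junk value `0` when the orbit never meets a short cycle; it is only read when it does.
def entryTime (u : α) : ℕ := sInf {e | OnShortCycle f r (f^[e] u)}

open Classical in
def token (u : α) (k : ℕ) : α ⊕ (Cycle α × ℕ) :=
  if OnShortCycle f r (f^[k] u) then .inr (periodicOrbit f (f^[k] u), k - entryTime f r u)
  else .inl (f^[k] u)

def code (u : α) : List (α ⊕ (Cycle α × ℕ)) := (List.range r).map (token f r u)

variable {f r}

lemma OnShortCycle.mem_periodicPts {x : α} (h : OnShortCycle f r x) : x ∈ periodicPts f :=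
  minimalPeriod_pos_iff_mem_periodicPts.mp h.1

lemma OnShortCycle.iterate {x : α} (h : OnShortCycle f r x) (n : ℕ) :
    OnShortCycle f r (f^[n] x) := by
  rw [OnShortCycle, minimalPeriod_apply_iterate h.mem_periodicPts]
  exact h

lemma OnShortCycle.apply {x : α} (h : OnShortCycle f r x) : OnShortCycle f r (f x) :=
  h.iterate 1

lemma onShortCycle_of_iterate_eq {x : α} {n : ℕ} (hn : 0 < n) (hnr : n < r)
    (hx : IsPeriodicPt f n x) : OnShortCycle f r x :=
  ⟨hx.minimalPeriod_pos hn, (hx.minimalPeriod_le hn).trans_lt hnr⟩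

lemma entryTime_le {u : α} {k : ℕ} (h : OnShortCycle f r (f^[k] u)) : entryTime f r u ≤ k :=
  Nat.sInf_le h

lemma onShortCycle_entryTime {u : α} {k : ℕ} (h : OnShortCycle f r (f^[k] u)) :
    OnShortCycle f r (f^[entryTime f r u] u) :=
  Nat.sInf_mem (⟨k, h⟩ : {e | OnShortCycle f r (f^[e] u)}.Nonempty)

lemma entryTime_eq_zero {u : α} (h : OnShortCycle f r u) : entryTime f r u = 0 :=
  Nat.eq_zero_of_le_zero (entryTime_le (k := 0) h)

lemma entryTime_apply {u : α} {k : ℕ} (hu : ¬ OnShortCycle f r u)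
    (h : OnShortCycle f r (f^[k] (f u))) : entryTime f r u = entryTime f r (f u) + 1 := by
  have hsucc : OnShortCycle f r (f^[k + 1] u) := by rwa [iterate_succ_apply]
  have hpos : entryTime f r u ≠ 0 := fun h0 =>
    hu (by simpa [h0] using onShortCycle_entryTime hsucc)
  obtain ⟨e, he⟩ := Nat.exists_eq_succ_of_ne_zero hpos
  have hle : entryTime f r (f u) ≤ e := by
    apply entryTime_le
    rw [← iterate_succ_apply, ← he]
    exact onShortCycle_entryTime hsucc
  have hge : entryTime f r u ≤ entryTime f r (f u) + 1 := by
    apply entryTime_le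
    rw [iterate_succ_apply]
    exact onShortCycle_entryTime h
  omega

lemma periodicOrbit_iterate_entryTime {u : α} {k : ℕ} (h : OnShortCycle f r (f^[k] u)) :
    periodicOrbit f (f^[entryTime f r u] u) = periodicOrbit f (f^[k] u) := by
  rw [← periodicOrbit_apply_iterate_eq (onShortCycle_entryTime h).mem_periodicPts
    (k - entryTime f r u), ← iterate_add_apply, Nat.sub_add_cancel (entryTime_le h)]

lemma token_apply_of_onShortCycle {u : α} (hu : OnShortCycle f r u) (k : ℕ) :
    token f r (f u) k = token f r u k := by
  have hk : f^[k] (f u) = f (f^[k] u) := by rw [← iterate_succ_apply, iterate_succ_apply']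
  unfold token
  rw [hk, if_pos (hu.iterate k).apply, if_pos (hu.iterate k), entryTime_eq_zero hu,
    entryTime_eq_zero hu.apply, periodicOrbit_apply_eq (hu.iterate k).mem_periodicPts]

lemma token_succ_of_not_onShortCycle {u : α} (hu : ¬ OnShortCycle f r u) (k : ℕ) :
    token f r u (k + 1) = token f r (f u) k := by
  unfold token
  rw [iterate_succ_apply]
  split_ifs with h
  · rw [entryTime_apply hu h, Nat.add_sub_add_right]
  · rfl

lemma eq_of_iterate_eq_of_not_onShortCycle {u : α} {k l : ℕ} (hu : ¬ OnShortCycle f r (f^[k] u))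
    (hkl : k ≤ l) (hl : l < r) (h : f^[k] u = f^[l] u) : k = l := by
  by_contra hne
  refine hu (onShortCycle_of_iterate_eq (n := l - k) (by omega) (by omega) ?_)
  show f^[l - k] (f^[k] u) = f^[k] u
  rw [← iterate_add_apply, Nat.sub_add_cancel hkl, h]

lemma eq_of_token_eq {u : α} {k l : ℕ} (hk : k < r) (hl : l < r)
    (h : token f r u k = token f r u l) : k = l := by
  unfold token at h
  split_ifs at h with huk hul hul
  · have hidx : k - entryTime f r u = l - entryTime f r u :=
      congrArg Prod.snd (Sum.inr_injective h)
    have := entryTime_le huk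
    have := entryTime_le hul
    omega
  · rcases le_total k l with hkl | hlk
    · exact eq_of_iterate_eq_of_not_onShortCycle huk hkl hl (Sum.inl_injective h)
    · exact (eq_of_iterate_eq_of_not_onShortCycle hul hlk hk (Sum.inl_injective h).symm).symm

lemma length_code (u : α) : (code f r u).length = r := by simp [code]

lemma nodup_code (u : α) : (code f r u).Nodup :=
  List.nodup_range.map_on fun _ hk _ hl h =>
    eq_of_token_eq (List.mem_range.1 hk) (List.mem_range.1 hl) h

lemma code_eq_or_close_code_apply (u : α) :
    code f r u = code f r (f u) ∨ Close (code f r u) (code f r (f u)) := by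
  by_cases hu : OnShortCycle f r u
  · left
    exact congrArg (List.map · _) (funext fun k => (token_apply_of_onShortCycle hu k).symm)
  · rcases r with _ | n
    · left; rfl
    · exact .inr (close_map_range_succ n (token_succ_of_not_onShortCycle hu))

lemma exists_iterate_eq_of_token_eq {u w : α} {k l : ℕ} (hk : k < r) (hl : l < r)
    (h : token f r u k = token f r w l) :
    ∃ a b c, a + b + c ≤ 3 * r - 3 ∧ f^[b] (f^[a] u) = f^[c] w := by
  unfold token at h
  split_ifs at h with huk hwl
  · set cu := f^[entryTime f r u] u
    have hcu : OnShortCycle f r cu := onShortCycle_entryTime huk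
    have hcw : OnShortCycle f r (f^[entryTime f r w] w) := onShortCycle_entryTime hwl
    have hcycle : periodicOrbit f cu = periodicOrbit f (f^[entryTime f r w] w) := by
      rw [periodicOrbit_iterate_entryTime huk, periodicOrbit_iterate_entryTime hwl]
      exact congrArg Prod.fst (Sum.inr_injective h)
    obtain ⟨n, hn⟩ := (mem_periodicOrbit_iff hcu.mem_periodicPts).1
      (hcycle ▸ self_mem_periodicOrbit hcw.mem_periodicPts)
    refine ⟨entryTime f r u, n % minimalPeriod f cu, entryTime f r w, ?_,
      by rw [iterate_mod_minimalPeriod_eq, hn]⟩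
    have := Nat.mod_lt n hcu.1
    have := hcu.2
    have := entryTime_le huk
    have := entryTime_le hwl
    omega
  · exact ⟨k, 0, l, by omega, Sum.inl_injective h⟩

end ShortCycleCode

section Graph

variable {α : Type*} {G : SimpleGraph α} {f : α → α}

lemma HasOrientationOutdegLEOne.exists_outNeighbor (hG : HasOrientationOutdegLEOne G) :
    ∃ f : α → α, (∀ a, G.Adj a (f a) ∨ a = f a) ∧
      ∀ a b, G.Adj a b → f a = b ∨ f b = a := by
  classical
  obtain ⟨t, ht, hinj⟩ := hG
  let f a := if h : ∃ b, ∃ e, t e = a ∧ (e : Sym2 α) = s(a, b) then h.choose else a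
  have hf_spec : ∀ a b e, t e = a → (e : Sym2 α) = s(a, b) →
      ∃ e', t e' = a ∧ (e' : Sym2 α) = s(a, f a) := by
    intro a b e hta he
    have h : ∃ b, ∃ e, t e = a ∧ (e : Sym2 α) = s(a, b) := ⟨b, e, hta, he⟩
    simpa only [f, dif_pos h] using h.choose_spec
  have hf_eq : ∀ e a b, t e = a → (e : Sym2 α) = s(a, b) → f a = b := by
    intro e a b hta he
    obtain ⟨e', hta', he'⟩ := hf_spec a b e hta he
    rw [hinj (hta'.trans hta.symm), he] at he'
    exact (Sym2.congr_right.1 he').symm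
  refine ⟨f, fun a => ?_, fun a b hab => ?_⟩
  · by_cases h : ∃ b, ∃ e, t e = a ∧ (e : Sym2 α) = s(a, b)
    · obtain ⟨b, e, hta, he⟩ := h
      obtain ⟨e', -, he'⟩ := hf_spec a b e hta he
      have hadj := e'.2
      rw [he'] at hadj
      exact .inl hadj
    · exact .inr (by simp only [f, dif_neg h])
  · rcases Sym2.mem_iff.1 (ht ⟨s(a, b), hab⟩) with hta | htb
    · exact .inl (hf_eq _ a b hta rfl)
    · exact .inr (hf_eq _ b a htb Sym2.eq_swap)

lemma edist_iterate_le (hf : ∀ a, G.Adj a (f a) ∨ a = f a) (u : α) (n : ℕ) :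
    G.edist u (f^[n] u) ≤ n := by
  induction n with
  | zero => simp
  | succ n ih =>
    calc G.edist u (f^[n + 1] u) ≤ G.edist u (f^[n] u) + G.edist (f^[n] u) (f (f^[n] u)) := by
          rw [iterate_succ_apply']; exact G.edist_triangle
      _ ≤ n + 1 := add_le_add ih (SimpleGraph.edist_le_one_iff_adj_or_eq.2 (hf _))
      _ = (n + 1 : ℕ) := by push_cast; rfl

lemma edist_le_of_iterate_eq (hf : ∀ a, G.Adj a (f a) ∨ a = f a) {u w : α} {a b c : ℕ}
    (h : f^[b] (f^[a] u) = f^[c] w) : G.edist u w ≤ (a + b + c : ℕ) :=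
  have hmid : G.edist (f^[a] u) (f^[c] w) ≤ b := h ▸ edist_iterate_le hf _ _
  calc G.edist u w
      ≤ G.edist u (f^[a] u) + (G.edist (f^[a] u) (f^[c] w) + G.edist (f^[c] w) w) :=
        G.edist_triangle.trans (by gcongr; exact G.edist_triangle)
    _ ≤ a + (b + c) := by
        rw [SimpleGraph.edist_comm (u := f^[c] w)]
        gcongr
        exacts [edist_iterate_le hf _ _, edist_iterate_le hf _ _]
    _ = (a + b + c : ℕ) := by push_cast; ring

lemma reachable_and_dist_le_of_edist_le {u v : α} {n : ℕ} (h : G.edist u v ≤ n) :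
    G.Reachable u v ∧ G.dist u v ≤ n := by
  have hr : G.Reachable u v :=
    SimpleGraph.reachable_of_edist_ne_top (ne_top_of_le_ne_top (ENat.natCast_ne_top n) h)
  exact ⟨hr, by rwa [← hr.coe_dist_eq_edist, Nat.cast_le] at h⟩

end Graph

theorem statement_2_general {V : Type} (G : SimpleGraph V)
    (hG : HasOrientationOutdegLEOne G) (r : ℕ) :
    ∃ (S : Type) (φ : V → List S),
      (∀ v, (φ v).length = r ∧ (φ v).Nodup) ∧
      (∀ u v, G.Adj u v → φ u = φ v ∨ Close (φ u) (φ v)) ∧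
      (∀ u v : V, ∀ x : S, x ∈ φ u → x ∈ φ v →
        G.Reachable u v ∧ G.dist u v ≤ 3 * r - 3) := by
  obtain ⟨f, hf_adj, hf_edge⟩ := hG.exists_outNeighbor
  refine ⟨_, code f r, fun v => ⟨length_code v, nodup_code v⟩, fun u v huv => ?_, ?_⟩
  · rcases hf_edge u v huv with rfl | rfl
    · exact code_eq_or_close_code_apply u
    · exact (code_eq_or_close_code_apply v).imp Eq.symm Close.symm
  · intro u w x hu hw
    obtain ⟨k, hk, rfl⟩ := List.mem_map.1 hu
    obtain ⟨l, hl, hlk⟩ := List.mem_map.1 hw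
    obtain ⟨a, b, c, habc, h⟩ :=
      exists_iterate_eq_of_token_eq (List.mem_range.1 hk) (List.mem_range.1 hl) hlk.symm
    exact reachable_and_dist_le_of_edist_le
      ((edist_le_of_iterate_eq hf_adj h).trans (by exact_mod_cast habc))

theorem statement_2 {V : Type} [Fintype V] (G : SimpleGraph V)
    (hG : HasOrientationOutdegLEOne G) (r : ℕ) (hr : 0 < r) :
    ∃ (S : Type) (φ : V → List S),
      (∀ v, (φ v).length = r ∧ (φ v).Nodup) ∧
      (∀ u v, G.Adj u v → φ u = φ v ∨ Close (φ u) (φ v)) ∧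
      (∀ u v : V, ∀ x : S, x ∈ φ u → x ∈ φ v →
        G.Reachable u v ∧ G.dist u v ≤ 3 * r - 3) :=
  statement_2_general G hG r

end TwwPaper
end
end

section
/- If G and H are graphs and φ : V(G) → V(H) is a map such that for every edge uv of G either φ(u)φ(v) is an edge of H or φ(u) = φ(v), then stww(G) ≤ max{stww(H), m·Δ(G)}, where m = max over v ∈ V(H) of |φ⁻¹(v)|. -/
/-!
Contract first inside the fibres of `φ`, one pair of parts at a time: every part then lies in a
fibre, so it has at most `m` vertices and degree at most `m · Δ(G)` in the quotient. Once the
parts are exactly the nonempty fibres, follow an optimal contraction sequence of `H` pulled back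
along `φ`. A merge in `H` becomes a merge of the corresponding preimages, or nothing when one of
them is empty; and since `φ` maps every edge to an edge or to a single vertex, every neighbour of
a preimage part in the quotient of `G` is the preimage of a neighbour in the quotient of `H`, so
degrees stay at most `stww H`.
-/

noncomputable section

namespace TwwPaper

open Finset

variable {V : Type*}

section Merge

variable {α : Type*} [DecidableEq α] {s : Finset α}

def _root_.Finpartition.mergeParts (P : Finpartition s) {A B : Finset α} (hA : A ∈ P.parts)
    (hB : B ∈ P.parts) (hAB : A ≠ B) : Finpartition s where
  parts := insert (A ∪ B) ((P.parts.erase A).erase B)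
  supIndep := by
    rw [supIndep_iff_pairwiseDisjoint, coe_insert]
    refine (P.disjoint.subset ?_).insert fun C hC _ => ?_
    · intro C hC
      exact mem_of_mem_erase (mem_of_mem_erase hC)
    · obtain ⟨⟨hC, hCA⟩, hCB⟩ : (C ∈ P.parts ∧ C ≠ A) ∧ C ≠ B := by simpa using hC
      exact disjoint_union_left.2 ⟨P.disjoint hA hC hCA.symm, P.disjoint hB hC hCB.symm⟩
  sup_parts := by
    refine le_antisymm (Finset.sup_le fun C hC => ?_) fun v hv => ?_
    · rcases mem_insert.1 hC with rfl | hC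
      · exact union_subset (P.le hA) (P.le hB)
      · exact P.le (mem_of_mem_erase (mem_of_mem_erase hC))
    · obtain ⟨C, hC, hvC⟩ := P.exists_mem hv
      refine mem_sup.2 ?_
      by_cases hCAB : C = A ∨ C = B
      · exact ⟨A ∪ B, mem_insert_self _ _, by rcases hCAB with rfl | rfl <;> simp [hvC]⟩
      · push Not at hCAB
        exact ⟨C, by simp [hC, hCAB.1, hCAB.2], hvC⟩
  bot_notMem := by
    simp only [bot_eq_empty, mem_insert, mem_erase, not_or]
    exact ⟨fun h => P.ne_empty hA (subset_empty.1 (h ▸ subset_union_left)),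
      fun h => P.empty_notMem_parts h.2.2⟩

variable {P : Finpartition s} {A B : Finset α} {hA : A ∈ P.parts} {hB : B ∈ P.parts}
  {hAB : A ≠ B}

theorem _root_.Finpartition.parts_mergeParts :
    (P.mergeParts hA hB hAB).parts = insert (A ∪ B) ((P.parts.erase A).erase B) := rfl

theorem _root_.Finpartition.card_mergeParts_lt :
    #(P.mergeParts hA hB hAB).parts < #P.parts := by
  have hAB_notMem : A ∪ B ∉ (P.parts.erase A).erase B := fun h => by
    have hABA : A ∪ B = A := by
      obtain ⟨a, ha⟩ := P.nonempty_of_mem_parts hA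
      exact P.eq_of_mem_parts (mem_of_mem_erase (mem_of_mem_erase h)) hA
        (mem_union_left _ ha) ha
    obtain ⟨b, hb⟩ := P.nonempty_of_mem_parts hB
    exact disjoint_left.1 (P.disjoint hA hB hAB) (hABA ▸ mem_union_right A hb) hb
  have h2 : 2 ≤ #P.parts := one_lt_card.2 ⟨A, hA, B, hB, hAB⟩
  rw [Finpartition.parts_mergeParts, card_insert_of_notMem hAB_notMem,
    card_erase_of_mem (mem_erase.2 ⟨hAB.symm, hB⟩), card_erase_of_mem hA]
  omega

theorem _root_.Finpartition.le_mergeParts : P ≤ P.mergeParts hA hB hAB := by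
  intro C hC
  by_cases hCAB : C = A ∨ C = B
  · refine ⟨A ∪ B, mem_insert_self _ _, ?_⟩
    rcases hCAB with rfl | rfl
    exacts [subset_union_left, subset_union_right]
  · push Not at hCAB
    exact ⟨C, by simp [Finpartition.parts_mergeParts, hC, hCAB.1, hCAB.2], le_rfl⟩

theorem _root_.Finpartition.mergeParts_le {Q : Finpartition s} (hPQ : P ≤ Q) {C : Finset α}
    (hC : C ∈ Q.parts) (hAC : A ⊆ C) (hBC : B ⊆ C) : P.mergeParts hA hB hAB ≤ Q := by
  intro D hD
  rcases mem_insert.1 hD with rfl | hD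
  · exact ⟨C, hC, union_subset hAC hBC⟩
  · exact hPQ (mem_of_mem_erase (mem_of_mem_erase hD))

theorem _root_.Finpartition.exists_two_parts_subset_of_lt {Q : Finpartition s} (h : P < Q) :
    ∃ A ∈ P.parts, ∃ B ∈ P.parts, A ≠ B ∧ ∃ C ∈ Q.parts, A ⊆ C ∧ B ⊆ C := by
  by_contra! H
  refine h.not_ge fun C hC => ?_
  obtain ⟨A, hA, hAC⟩ := Finpartition.exists_le_of_le h.le hC
  refine ⟨A, hA, fun v hv => ?_⟩
  obtain ⟨B, hB, hvB⟩ := P.exists_mem (Q.le hC hv)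
  obtain ⟨C', hC', hBC'⟩ := h.le hB
  obtain rfl : C' = C := Q.eq_of_mem_parts hC' hC (hBC' hvB) hv
  obtain rfl : B = A := by_contra fun hBA => H B hB A hA hBA C' hC' hBC' hAC
  exact hvB

theorem _root_.Finpartition.eq_bot_of_forall_card_eq_one (h : ∀ A ∈ P.parts, #A = 1) :
    P = ⊥ := by
  refine le_antisymm (fun A hA => ⟨A, ?_, le_rfl⟩) bot_le
  obtain ⟨a, rfl⟩ := card_eq_one.1 (h A hA)
  exact Finpartition.mem_bot_iff.2 ⟨a, P.le hA (mem_singleton_self a), rfl⟩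

end Merge

section Contraction

variable [Fintype V] [DecidableEq V] (G : SimpleGraph V)

open Classical in
theorem quotDeg_eq_card_filter (P : Finpartition (univ : Finset V)) (A : Finset V) :
    quotDeg G P A = #{B ∈ P.parts | B ≠ A ∧ ∃ u ∈ A, ∃ v ∈ B, G.Adj u v} := by
  rw [quotDeg, ← Nat.card_eq_finsetCard]
  simp only [mem_filter]

theorem quotDeg_le_card_parts (P : Finpartition (univ : Finset V)) (A : Finset V) :
    quotDeg G P A ≤ #P.parts := by
  classical
  rw [quotDeg_eq_card_filter]
  exact card_filter_le _ _

theorem quotDeg_le_card_mul_maxDeg (P : Finpartition (univ : Finset V)) (A : Finset V) :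
    quotDeg G P A ≤ #A * maxDeg G := by
  classical
  let N : Finset V := A.biUnion fun u => (G.neighborSet u).toFinset
  calc quotDeg G P A ≤ #(N.image P.part) := by
        rw [quotDeg_eq_card_filter]
        refine card_le_card fun B hB => ?_
        obtain ⟨hB, -, u, hu, v, hv, huv⟩ := mem_filter.1 hB
        exact mem_image.2 ⟨v, mem_biUnion.2 ⟨u, hu, by simpa using huv⟩,
          P.part_eq_of_mem hB hv⟩
    _ ≤ #N := card_image_le
    _ ≤ ∑ u ∈ A, #(G.neighborSet u).toFinset := card_biUnion_le
    _ ≤ ∑ _u ∈ A, maxDeg G := sum_le_sum fun u _ => by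
        rw [← Nat.card_eq_card_toFinset]
        exact le_sup (f := deg G) (mem_univ u)
    _ = #A * maxDeg G := by rw [sum_const, smul_eq_mul]

def QuotDegLE (w : ℕ) (P : Finpartition (univ : Finset V)) : Prop :=
  ∀ A ∈ P.parts, quotDeg G P A ≤ w

def ContractionStep (w : ℕ) (P Q : Finpartition (univ : Finset V)) : Prop :=
  IsMergeStep P Q ∧ QuotDegLE G w Q

def Contracts (w : ℕ) : Finpartition (univ : Finset V) → Finpartition (univ : Finset V) → Prop :=
  Relation.ReflTransGen (ContractionStep G w)

variable {G}

theorem Contracts.mono {v w : ℕ} (hvw : v ≤ w) {P Q : Finpartition (univ : Finset V)}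
    (h : Contracts G v P Q) : Contracts G w P Q :=
  Relation.ReflTransGen.mono (fun _ _ hs => ⟨hs.1, fun A hA => (hs.2 A hA).trans hvw⟩) _ _ h

theorem contracts_of_chain {w n : ℕ} {f : Fin (n + 1) → Finpartition (univ : Finset V)}
    (hmerge : ∀ i : Fin n, IsMergeStep (f i.castSucc) (f i.succ))
    (hdeg : ∀ i, QuotDegLE G w (f i)) (i : Fin (n + 1)) : Contracts G w (f 0) (f i) := by
  induction i using Fin.induction with
  | zero => exact .refl
  | succ i ih => exact ih.tail ⟨hmerge i, hdeg i.succ⟩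

theorem exists_chain_of_contracts {w : ℕ} {P Q : Finpartition (univ : Finset V)}
    (hP : QuotDegLE G w P) (h : Contracts G w P Q) :
    ∃ n, ∃ f : Fin (n + 1) → Finpartition (univ : Finset V), f 0 = P ∧
      f (Fin.last n) = Q ∧ (∀ i : Fin n, IsMergeStep (f i.castSucc) (f i.succ)) ∧
      ∀ i, QuotDegLE G w (f i) := by
  induction h with
  | refl => exact ⟨0, fun _ => P, rfl, rfl, fun i => i.elim0, fun _ => hP⟩
  | @tail R S _ hstep ih =>
    obtain ⟨n, f, h0, hlast, hmerge, hdeg⟩ := ih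
    refine ⟨n + 1, Fin.snoc f S, Fin.snoc_castSucc (i := 0) .. |>.trans h0, Fin.snoc_last ..,
      Fin.lastCases ?_ fun i => ?_, Fin.lastCases ?_ fun i => ?_⟩
    · simpa [hlast] using hstep.1
    · rw [Fin.succ_castSucc, Fin.snoc_castSucc, Fin.snoc_castSucc]
      exact hmerge i
    · simpa using hstep.2
    · simpa using hdeg i

theorem seqOK_iff_contracts {w : ℕ} : SeqOK G quotDeg w ↔
    QuotDegLE G w ⊥ ∧ ∃ Q, Contracts G w ⊥ Q ∧ #Q.parts ≤ 1 := by
  constructor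
  · rintro ⟨n, f, h0, hlast, hmerge, hdeg⟩
    rw [← Finpartition.eq_bot_of_forall_card_eq_one h0]
    exact ⟨hdeg 0, _, contracts_of_chain hmerge hdeg (Fin.last n), hlast⟩
  · rintro ⟨hbot, Q, h, hQ⟩
    obtain ⟨n, f, h0, hlast, hmerge, hdeg⟩ := exists_chain_of_contracts hbot h
    refine ⟨n, f, fun A hA => ?_, hlast ▸ hQ, hmerge, hdeg⟩
    obtain ⟨a, -, rfl⟩ := Finpartition.mem_bot_iff.1 (h0 ▸ hA)
    exact card_singleton a

theorem contracts_of_le {w : ℕ} {P Q : Finpartition (univ : Finset V)} (hPQ : P ≤ Q)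
    (hw : ∀ R ≤ Q, QuotDegLE G w R) : Contracts G w P Q := by
  induction hn : #P.parts using Nat.strong_induction_on generalizing P with
  | _ n ih =>
    rcases hPQ.eq_or_lt with rfl | hlt
    · exact .refl
    obtain ⟨A, hA, B, hB, hAB, C, hC, hAC, hBC⟩ := Finpartition.exists_two_parts_subset_of_lt hlt
    have hle : P.mergeParts hA hB hAB ≤ Q := Finpartition.mergeParts_le hPQ hC hAC hBC
    exact .head ⟨⟨A, hA, B, hB, hAB, rfl⟩, hw _ hle⟩
      (ih _ (hn ▸ Finpartition.card_mergeParts_lt) hle rfl)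

theorem seqOK_card : SeqOK G quotDeg (Fintype.card V) := by
  have hw : ∀ R : Finpartition (univ : Finset V), QuotDegLE G (Fintype.card V) R :=
    fun R A _ => (quotDeg_le_card_parts G R A).trans R.card_parts_le_card
  refine seqOK_iff_contracts.2 ⟨hw ⊥, ⊤, contracts_of_le le_top fun R _ => hw R, ?_⟩
  exact (card_le_card (Finpartition.parts_top_subset _)).trans (card_singleton _).le

theorem seqOK_stww : SeqOK G quotDeg (stww G) :=
  Nat.sInf_mem (s := {w | SeqOK G quotDeg w}) ⟨_, seqOK_card⟩

end Contraction

section Comap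

variable {W : Type*} [Fintype V] [DecidableEq W] (φ : V → W)

def comapPart (B : Finset W) : Finset V := {v | φ v ∈ B}

@[simp]
theorem mem_comapPart {B : Finset W} {v : V} : v ∈ comapPart φ B ↔ φ v ∈ B := by
  simp [comapPart]

theorem eq_of_comapPart_eq {s : Finset W} {Q : Finpartition s} {B C : Finset W}
    (hB : B ∈ Q.parts) (hC : C ∈ Q.parts) (hne : (comapPart φ B).Nonempty)
    (h : comapPart φ B = comapPart φ C) : B = C := by
  obtain ⟨v, hv⟩ := hne
  exact Q.eq_of_mem_parts hB hC ((mem_comapPart φ).1 hv) ((mem_comapPart φ).1 (h ▸ hv))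

variable [DecidableEq V]

theorem comapPart_union (B C : Finset W) :
    comapPart φ (B ∪ C) = comapPart φ B ∪ comapPart φ C := by
  ext v
  simp

variable [Fintype W]

def _root_.Finpartition.comap (Q : Finpartition (univ : Finset W)) :
    Finpartition (univ : Finset V) :=
  .ofErase (Q.parts.image (comapPart φ))
    (by
      rw [supIndep_iff_pairwiseDisjoint, coe_image]
      rintro _ ⟨B, hB, rfl⟩ _ ⟨C, hC, rfl⟩ hne
      have hBC : B ≠ C := by rintro rfl; exact hne rfl
      exact disjoint_left.2 fun v hvB hvC => disjoint_left.1 (Q.disjoint hB hC hBC)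
        ((mem_comapPart φ).1 hvB) ((mem_comapPart φ).1 hvC))
    (eq_univ_of_forall fun v => mem_sup.2 ⟨comapPart φ (Q.part (φ v)),
      mem_image_of_mem _ (Q.part_mem.2 (mem_univ _)), by simp⟩)

variable {φ}

theorem mem_comap_parts {Q : Finpartition (univ : Finset W)} {X : Finset V} :
    X ∈ (Q.comap φ).parts ↔ X.Nonempty ∧ ∃ B ∈ Q.parts, comapPart φ B = X := by
  rw [Finpartition.comap, Finpartition.ofErase_parts, mem_erase, mem_image, bot_eq_empty,
    ← nonempty_iff_ne_empty]

theorem card_comap_parts_le (Q : Finpartition (univ : Finset W)) :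
    #(Q.comap φ).parts ≤ #Q.parts :=
  (card_erase_le).trans (card_image_le (f := comapPart φ))

variable (φ) in
theorem comap_isMergeStep {Q Q' : Finpartition (univ : Finset W)} (h : IsMergeStep Q Q') :
    Q'.comap φ = Q.comap φ ∨ IsMergeStep (Q.comap φ) (Q'.comap φ) := by
  obtain ⟨A, hA, B, hB, hAB, hQ'⟩ := h
  have hmem : ∀ X, X ∈ (Q'.comap φ).parts ↔ X.Nonempty ∧ (comapPart φ A ∪ comapPart φ B = X ∨
      ∃ C, (C ≠ B ∧ C ≠ A ∧ C ∈ Q.parts) ∧ comapPart φ C = X) := by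
    intro X
    simp only [mem_comap_parts, hQ', mem_insert, mem_erase, or_and_right, exists_or,
      exists_eq_left, comapPart_union]
  by_cases hempty : comapPart φ A = ∅ ∨ comapPart φ B = ∅
  · left
    ext X
    rw [hmem, mem_comap_parts]
    grind [nonempty_iff_ne_empty]
  · right
    push Not at hempty
    obtain ⟨hAne, hBne⟩ := hempty
    refine ⟨comapPart φ A, mem_comap_parts.2 ⟨hAne, A, hA, rfl⟩,
      comapPart φ B, mem_comap_parts.2 ⟨hBne, B, hB, rfl⟩,
      fun h => hAB (eq_of_comapPart_eq φ hA hB hAne h), ?_⟩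
    ext X
    rw [hmem]
    simp only [mem_insert, mem_erase, mem_comap_parts]
    grind [eq_of_comapPart_eq, nonempty_iff_ne_empty]

theorem card_le_of_le_comap_bot {m : ℕ} (hm : ∀ x, Nat.card {v // φ v = x} ≤ m)
    {R : Finpartition (univ : Finset V)} (hR : R ≤ (⊥ : Finpartition (univ : Finset W)).comap φ)
    {A : Finset V} (hA : A ∈ R.parts) : #A ≤ m := by
  obtain ⟨C, hC, hAC⟩ := hR hA
  obtain ⟨-, B, hB, rfl⟩ := mem_comap_parts.1 hC
  obtain ⟨x, -, rfl⟩ := Finpartition.mem_bot_iff.1 hB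
  calc #A ≤ #(comapPart φ {x}) := card_le_card hAC
    _ = Nat.card {v // φ v = x} := by
      rw [Nat.card_eq_fintype_card, Fintype.card_subtype]
      simp [comapPart]
    _ ≤ m := hm x

variable {G : SimpleGraph V} {H : SimpleGraph W}

theorem quotDegLE_comap (hφ : ∀ u v, G.Adj u v → H.Adj (φ u) (φ v) ∨ φ u = φ v)
    {w : ℕ} {Q : Finpartition (univ : Finset W)} (hQ : QuotDegLE H w Q) :
    QuotDegLE G w (Q.comap φ) := by
  classical
  intro X hX
  obtain ⟨-, B, hB, rfl⟩ := mem_comap_parts.1 hX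
  refine le_trans ?_ (hQ B hB)
  rw [quotDeg_eq_card_filter, quotDeg_eq_card_filter]
  refine (card_le_card fun Y hY => ?_).trans (card_image_le (f := comapPart φ))
  obtain ⟨hY, hYB, u, hu, v, hv, huv⟩ := mem_filter.1 hY
  obtain ⟨-, C, hC, rfl⟩ := mem_comap_parts.1 hY
  have hCB : C ≠ B := by rintro rfl; exact hYB rfl
  rw [mem_comapPart] at hu hv
  refine mem_image.2 ⟨C, mem_filter.2 ⟨hC, hCB, ?_⟩, rfl⟩
  rcases hφ u v huv with h | h
  · exact ⟨φ u, hu, φ v, hv, h⟩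
  · exact absurd (Q.eq_of_mem_parts hC hB (h ▸ hv) hu) hCB

theorem Contracts.comap (hφ : ∀ u v, G.Adj u v → H.Adj (φ u) (φ v) ∨ φ u = φ v)
    {w : ℕ} {P Q : Finpartition (univ : Finset W)} (h : Contracts H w P Q) :
    Contracts G w (P.comap φ) (Q.comap φ) := by
  refine Relation.ReflTransGen.lift' (Finpartition.comap φ)
    (fun P Q (hPQ : ContractionStep H w P Q) => ?_) _ _ h
  show Contracts G w (P.comap φ) (Q.comap φ)
  rcases comap_isMergeStep φ hPQ.1 with heq | hstep
  · rw [heq]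
    exact .refl
  · exact .single ⟨hstep, quotDegLE_comap hφ hPQ.2⟩

end Comap

theorem statement_3 {V W : Type*} [Fintype V] [DecidableEq V] [Fintype W] [DecidableEq W]
    (G : SimpleGraph V) (H : SimpleGraph W) (φ : V → W)
    (hφ : ∀ u v, G.Adj u v → H.Adj (φ u) (φ v) ∨ φ u = φ v)
    (m : ℕ) (hm : m = Finset.univ.sup (fun w : W => Nat.card {v : V // φ v = w})) :
    stww G ≤ max (stww H) (m * maxDeg G) := by
  set w := max (stww H) (m * maxDeg G)
  have hfiber (x : W) : Nat.card {v // φ v = x} ≤ m :=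
    hm ▸ le_sup (f := fun x => Nat.card {v // φ v = x}) (mem_univ x)
  have hfine (R : Finpartition (univ : Finset V))
      (hR : R ≤ (⊥ : Finpartition (univ : Finset W)).comap φ) : QuotDegLE G w R :=
    fun A hA => (quotDeg_le_card_mul_maxDeg G R A).trans <|
      (Nat.mul_le_mul_right _ (card_le_of_le_comap_bot hfiber hR hA)).trans (le_max_right _ _)
  obtain ⟨-, Q, hQ, hQcard⟩ := seqOK_iff_contracts.1 (seqOK_stww (G := H))
  refine Nat.sInf_le (seqOK_iff_contracts.2 ⟨hfine ⊥ bot_le, Q.comap φ, ?_,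
    (card_comap_parts_le Q).trans hQcard⟩)
  exact (contracts_of_le bot_le hfine).trans ((hQ.mono (le_max_left _ _)).comap hφ)

end TwwPaper
end
end

section
/- Fix 0 < ε < 0.1 and let α = (1/4)·e^{−4/ε}. For n, m with (1+ε)n ≤ m ≤ n²/8, the proportion of graphs G with vertex set [n] and exactly m edges that fail to be α-balanced tends to 0 as n → ∞. Here G is α-balanced if e(G[X]) ≤ (m/n)·|X| for every X ⊆ [n] with |X| ≤ α(n−1). -/
noncomputable section

namespace TwwPaper

open Finset

variable {V : Type*}

/-! A union bound over the set witnessing the imbalance. If `G` is not balanced, some `X` with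
`k = |X| ≤ α(n-1)` spans `t = ⌊mk/n⌋ + 1 > (1+ε)k` edges; choosing `X`, `t` pairs inside `X` and
the other `m - t` edges shows there are at most `C(n,k) C(C(k,2),t) C(N,m-t)` such graphs, where
`N = C(n,2)`. With `C(a,b) ≤ (3a/b)^b` and `C(N,m-t) ≤ (m/(N-m))^t C(N,m)` this is at most
`ρ^k C(N,m)` for `ρ = (27/2) b^ε`, `b = 9k/(2n) ≤ 9α/2`. The factor `e^{-4/ε}` in `α` is what makes
`ρ ≤ 1/2`, and `ρ = O(k n^{-ε})`, so the sum over `k` is `O(n^{-ε}) C(N,m)`. -/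

open SimpleGraph

theorem card_filter_powersetCard_inter_le {α : Type*} [DecidableEq α] (U W : Finset α) (m t : ℕ) :
    #{E ∈ U.powersetCard m | t ≤ #(E ∩ W)} ≤ (#(U ∩ W)).choose t * (#U).choose (m - t) := by
  rw [← card_powersetCard, ← card_powersetCard, ← card_product]
  refine (card_le_card fun E hE ↦ ?_).trans
    (card_image_le (f := fun p : Finset α × Finset α ↦ p.1 ∪ p.2))
  obtain ⟨hE, htE⟩ := mem_filter.1 hE
  obtain ⟨hEU, hEm⟩ := mem_powersetCard.1 hE
  obtain ⟨S, hSE, hSt⟩ := exists_subset_card_eq htE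
  have hS : S ⊆ E := hSE.trans inter_subset_left
  refine mem_image.2 ⟨(S, E \ S), mem_product.2 ⟨mem_powersetCard.2 ⟨?_, hSt⟩,
    mem_powersetCard.2 ⟨sdiff_subset.trans hEU, ?_⟩⟩, union_sdiff_of_subset hS⟩
  · exact subset_inter (hS.trans hEU) (hSE.trans inter_subset_right)
  · rw [card_sdiff_of_subset hS, hEm, hSt]

theorem edgeCount_eq_card_edgeFinset (G : SimpleGraph V) [Fintype G.edgeSet] :
    edgeCount G = #G.edgeFinset := by
  rw [edgeCount, Nat.card_eq_fintype_card, edgeFinset_card]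

section GraphCounting

variable [Fintype V] [DecidableEq V]

theorem edgesIn_eq_card_inter_sym2 (G : SimpleGraph V) [Fintype G.edgeSet] (X : Finset V) :
    edgesIn G X = #(G.edgeFinset ∩ X.sym2) := by
  classical
  rw [edgesIn, Nat.card_eq_fintype_card, Fintype.card_subtype]
  congr 1
  ext e
  simp [mem_sym2_iff]

theorem edgeFinset_fromEdgeSet_of_subset {E : Finset (Sym2 V)}
    (hE : E ⊆ (⊤ : SimpleGraph V).edgeFinset) :
    (fromEdgeSet (E : Set (Sym2 V))).edgeFinset = E := by
  ext e
  have := @hE e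
  simp_all

theorem card_edgeFinset_top_inter_sym2 (X : Finset V) :
    #((⊤ : SimpleGraph V).edgeFinset ∩ X.sym2) = (#X).choose 2 := by
  rw [← Sym2.card_image_offDiag, ← Sym2.filter_image_mk_not_isDiag, ← sym2_eq_image]
  congr 1
  ext e
  simp [and_comm]

theorem card_edgeCount_eq (m : ℕ) :
    Nat.card {G : SimpleGraph V // edgeCount G = m} = ((Fintype.card V).choose 2).choose m := by
  classical
  rw [Nat.card_eq_fintype_card, Fintype.card_subtype, ← card_edgeFinset_top_eq_card_choose_two,
    ← card_powersetCard]
  refine card_nbij' (fun G ↦ G.edgeFinset) (fun E ↦ fromEdgeSet E) (fun G hG ↦ ?_)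
    (fun E hE ↦ ?_) (fun G _ ↦ by simp) (fun E hE ↦ ?_)
  · rw [mem_coe, mem_filter, edgeCount_eq_card_edgeFinset] at hG
    exact mem_powersetCard.2 ⟨edgeFinset_mono le_top, hG.2⟩
  · rw [mem_coe, mem_powersetCard] at hE
    rw [mem_coe, mem_filter, edgeCount_eq_card_edgeFinset, edgeFinset_fromEdgeSet_of_subset hE.1]
    exact ⟨mem_univ _, hE.2⟩
  · convert edgeFinset_fromEdgeSet_of_subset (mem_powersetCard.1 hE).1

open Classical in
theorem card_edgeCount_edgesIn_le (m t : ℕ) (X : Finset V) :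
    #{G : SimpleGraph V | edgeCount G = m ∧ t ≤ edgesIn G X} ≤
      ((#X).choose 2).choose t * ((Fintype.card V).choose 2).choose (m - t) := by
  rw [← card_edgeFinset_top_inter_sym2, ← card_edgeFinset_top_eq_card_choose_two]
  refine le_trans ?_ (card_filter_powersetCard_inter_le _ _ m t)
  refine card_le_card_of_injOn (fun G ↦ G.edgeFinset) (fun G hG ↦ ?_)
    (fun G₁ _ G₂ _ h ↦ edgeFinset_inj.1 h)
  rw [mem_coe, mem_filter, edgeCount_eq_card_edgeFinset, edgesIn_eq_card_inter_sym2] at hG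
  exact mem_filter.2 ⟨mem_powersetCard.2 ⟨edgeFinset_mono le_top, hG.2.1⟩, hG.2.2⟩

open Classical in
theorem card_edgeCount_exists_edgesIn_le (m : ℕ) (p : ℕ → Prop) (t : ℕ → ℕ) :
    #{G : SimpleGraph V | edgeCount G = m ∧ ∃ X : Finset V, p #X ∧ t #X ≤ edgesIn G X} ≤
      ∑ k ∈ range (Fintype.card V + 1) with p k, (Fintype.card V).choose k *
        (((k.choose 2).choose (t k)) * ((Fintype.card V).choose 2).choose (m - t k)) := by
  calc _ ≤ #({X ∈ (univ : Finset V).powerset | p #X}.biUnion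
        fun X ↦ {G : SimpleGraph V | edgeCount G = m ∧ t #X ≤ edgesIn G X}) := by
        refine card_le_card fun G hG ↦ ?_
        obtain ⟨hGm, X, hX, htX⟩ := (mem_filter.1 hG).2
        exact mem_biUnion.2 ⟨X, mem_filter.2 ⟨mem_powerset.2 (subset_univ X), hX⟩,
          mem_filter.2 ⟨mem_univ G, hGm, htX⟩⟩
    _ ≤ ∑ X ∈ (univ : Finset V).powerset with p #X,
          ((#X).choose 2).choose (t #X) * ((Fintype.card V).choose 2).choose (m - t #X) :=
        card_biUnion_le.trans (sum_le_sum fun X _ ↦ card_edgeCount_edgesIn_le m (t #X) X)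
    _ = _ := by
        rw [sum_filter, sum_powerset_apply_card fun k ↦ if p k then
          (k.choose 2).choose (t k) * ((Fintype.card V).choose 2).choose (m - t k) else 0,
          card_univ, sum_filter]
        simp only [smul_eq_mul, mul_ite, mul_zero]

end GraphCounting

theorem choose_le_three_mul_div_pow (n k : ℕ) : (n.choose k : ℝ) ≤ (3 * n / k) ^ k := by
  have hkk : (0 : ℝ) < (k : ℝ) ^ k := by
    rcases k.eq_zero_or_pos with rfl | hk
    · simp
    · positivity
  have hfac : (k : ℝ) ^ k / k.factorial ≤ 3 ^ k := by
    refine (Real.pow_div_factorial_le_exp _ k.cast_nonneg k).trans ?_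
    rw [← Real.exp_one_pow]
    exact pow_le_pow_left₀ (Real.exp_pos 1).le (Real.exp_one_lt_d9.le.trans (by norm_num)) k
  calc (n.choose k : ℝ) ≤ (n : ℝ) ^ k / k.factorial := Nat.choose_le_pow_div k n
    _ = (n : ℝ) ^ k * ((k : ℝ) ^ k / k.factorial) / (k : ℝ) ^ k := by field_simp
    _ ≤ (n : ℝ) ^ k * 3 ^ k / (k : ℝ) ^ k := by gcongr
    _ = (3 * n / k) ^ k := by rw [div_pow, mul_pow, mul_comm]

theorem sub_pow_mul_choose_sub_le (N m : ℕ) {t : ℕ} (ht : t ≤ m) :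
    (N - m) ^ t * N.choose (m - t) ≤ m ^ t * N.choose m := by
  induction t with
  | zero => simp
  | succ t ih =>
    have hstep : (N - m) * N.choose (m - (t + 1)) ≤ m * N.choose (m - t) := by
      have hpascal := Nat.choose_succ_right_eq N (m - (t + 1))
      rw [show m - (t + 1) + 1 = m - t by omega] at hpascal
      calc (N - m) * N.choose (m - (t + 1))
          ≤ N.choose (m - (t + 1)) * (N - (m - (t + 1))) := by
            rw [mul_comm]; exact Nat.mul_le_mul_left _ (by omega)
        _ = N.choose (m - t) * (m - t) := hpascal.symm
        _ ≤ m * N.choose (m - t) := by rw [mul_comm]; exact Nat.mul_le_mul_right _ (by omega)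
    calc (N - m) ^ (t + 1) * N.choose (m - (t + 1))
        = (N - m) ^ t * ((N - m) * N.choose (m - (t + 1))) := by ring
      _ ≤ (N - m) ^ t * (m * N.choose (m - t)) := Nat.mul_le_mul_left _ hstep
      _ = m * ((N - m) ^ t * N.choose (m - t)) := by ring
      _ ≤ m * (m ^ t * N.choose m) := Nat.mul_le_mul_left _ (ih (by omega))
      _ = m ^ (t + 1) * N.choose m := by ring

theorem choose_sub_le_div_pow_mul_choose {N m t : ℕ} (hmN : m < N) (ht : t ≤ m) :
    (N.choose (m - t) : ℝ) ≤ ((m : ℝ) / (N - m)) ^ t * N.choose m := by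
  have hNm : (0 : ℝ) < N - m := by rw [sub_pos]; exact_mod_cast hmN
  have key : ((N - m : ℕ) : ℝ) ^ t * N.choose (m - t) ≤ (m : ℝ) ^ t * N.choose m := by
    exact_mod_cast sub_pow_mul_choose_sub_le N m ht
  rw [Nat.cast_sub hmN.le] at key
  rw [div_pow, div_mul_eq_mul_div, le_div_iff₀ (pow_pos hNm t)]
  linarith

theorem choose_mul_choose_mul_choose_le (n k m t : ℕ) (hk : 0 < k) (hn : 12 ≤ n)
    (hm : (m : ℝ) ≤ (n : ℝ) ^ 2 / 8) (hkt : (m : ℝ) / n * k ≤ t) (htm : t ≤ m) :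
    (n.choose k : ℝ) * ((k.choose 2).choose t) * ((n.choose 2).choose (m - t)) ≤
      (3 * n / k) ^ k * (9 * k / (2 * n)) ^ t * (n.choose 2).choose m := by
  set N := n.choose 2
  set K := k.choose 2
  have hn0 : (0 : ℝ) < n := by positivity
  have hn12 : (12 : ℝ) ≤ n := by exact_mod_cast hn
  have hNm : (n : ℝ) ^ 2 / 3 ≤ N - m := by
    rw [Nat.cast_choose_two]; nlinarith
  have hNm0 : (0 : ℝ) < N - m := by linarith [(by positivity : (0 : ℝ) < (n : ℝ) ^ 2 / 3)]
  have hmN : m < N := by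
    have : (m : ℝ) < N := by nlinarith
    exact_mod_cast this
  have hK : 2 * (K : ℝ) ≤ (k : ℝ) ^ 2 := by
    rw [Nat.cast_choose_two]; nlinarith
  have hbase : 3 * (K : ℝ) / t * ((m : ℝ) / (N - m)) ≤ 9 * k / (2 * n) := by
    rcases t.eq_zero_or_pos with rfl | ht
    · simp only [Nat.cast_zero, div_zero, zero_mul]; positivity
    have htNm : (m : ℝ) * k * n / 3 ≤ t * (N - m) := by
      calc (m : ℝ) * k * n / 3 = (m : ℝ) / n * k * (n ^ 2 / 3) := by field_simp
        _ ≤ t * (N - m) := by gcongr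
    rw [div_mul_div_comm, div_le_div_iff₀ (mul_pos (by exact_mod_cast ht) hNm0) (by positivity)]
    nlinarith [(by positivity : (0 : ℝ) ≤ m * n)]
  calc (n.choose k : ℝ) * K.choose t * N.choose (m - t)
      ≤ (3 * n / k) ^ k * (3 * K / t) ^ t * (((m : ℝ) / (N - m)) ^ t * N.choose m) := by
        gcongr
        · exact choose_le_three_mul_div_pow n k
        · exact choose_le_three_mul_div_pow K t
        · exact choose_sub_le_div_pow_mul_choose hmN htm
    _ = (3 * n / k) ^ k * (3 * K / t * ((m : ℝ) / (N - m))) ^ t * N.choose m := by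
        rw [mul_pow]; ring
    _ ≤ (3 * n / k) ^ k * (9 * k / (2 * n)) ^ t * N.choose m := by
        gcongr

theorem div_pow_mul_pow_le_mul_rpow_pow {a b ε : ℝ} {k t : ℕ} (ha : 0 ≤ a) (hb0 : 0 < b)
    (hb1 : b ≤ 1) (hkt : (1 + ε) * k ≤ t) : (a / b) ^ k * b ^ t ≤ (a * b ^ ε) ^ k := by
  have hbt : b ^ t ≤ (b ^ (1 + ε)) ^ k := by
    rw [← Real.rpow_natCast, ← Real.rpow_natCast, ← Real.rpow_mul hb0.le]
    exact Real.rpow_le_rpow_of_exponent_ge hb0 hb1 hkt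
  calc (a / b) ^ k * b ^ t ≤ (a / b) ^ k * (b ^ (1 + ε)) ^ k := by
        gcongr
    _ = (a * b ^ ε) ^ k := by
        rw [← mul_pow, Real.rpow_add hb0, Real.rpow_one]
        field_simp

theorem exp_neg_four_le : Real.exp (-4) ≤ 1 / 54 := by
  have hexp : Real.exp 1 ^ 4 = Real.exp 4 := by rw [← Real.exp_nat_mul]; norm_num
  rw [Real.exp_neg, ← hexp, inv_eq_one_div]
  gcongr
  calc (54 : ℝ) ≤ 2.7182818283 ^ 4 := by norm_num
    _ ≤ Real.exp 1 ^ 4 := by gcongr; exact Real.exp_one_gt_d9.le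

theorem mul_rpow_le_half {ε b : ℝ} (hε0 : 0 < ε) (hε1 : ε ≤ 1) (hb0 : 0 ≤ b)
    (hb : b ≤ 9 / 8 * Real.exp (-(4 / ε))) : 27 / 2 * b ^ ε ≤ 1 / 2 := by
  have hexp : Real.exp (-(4 / ε)) ^ ε = Real.exp (-4) := by
    rw [← Real.exp_mul]; field_simp
  have h98 : (9 / 8 : ℝ) ^ ε ≤ 9 / 8 := by
    simpa using Real.rpow_le_rpow_of_exponent_le (by norm_num : (1 : ℝ) ≤ 9 / 8) hε1
  calc 27 / 2 * b ^ ε ≤ 27 / 2 * (9 / 8 * Real.exp (-(4 / ε))) ^ ε := by gcongr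
    _ = 27 / 2 * ((9 / 8) ^ ε * Real.exp (-4)) := by
        rw [Real.mul_rpow (by norm_num) (Real.exp_pos _).le, hexp]
    _ ≤ 27 / 2 * (9 / 8 * (1 / 54)) := by gcongr; exact exp_neg_four_le
    _ ≤ 1 / 2 := by norm_num

theorem rpow_div_le_mul_rpow_neg {ε : ℝ} (hε1 : ε ≤ 1) {k : ℕ} (hk : 1 ≤ k) (n : ℕ) :
    (9 * k / (2 * n) : ℝ) ^ ε ≤ 9 / 2 * k * (n : ℝ) ^ (-ε) := by
  have hk1 : (1 : ℝ) ≤ k := by exact_mod_cast hk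
  have h92 : (9 / 2 : ℝ) ^ ε ≤ 9 / 2 := by
    simpa using Real.rpow_le_rpow_of_exponent_le (by norm_num : (1 : ℝ) ≤ 9 / 2) hε1
  have hkε : (k : ℝ) ^ ε ≤ k := by
    simpa using Real.rpow_le_rpow_of_exponent_le hk1 hε1
  calc (9 * k / (2 * n) : ℝ) ^ ε = (9 / 2) ^ ε * (k : ℝ) ^ ε * (n : ℝ) ^ (-ε) := by
        rw [show (9 * k / (2 * n) : ℝ) = 9 / 2 * k / n by ring,
          Real.div_rpow (by positivity) (by positivity),
          Real.mul_rpow (by norm_num) (by positivity), Real.rpow_neg (by positivity), div_eq_mul_inv]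
    _ ≤ 9 / 2 * k * (n : ℝ) ^ (-ε) := by gcongr

theorem choose_mul_choose_mul_choose_le_geometric {ε : ℝ} (hε0 : 0 < ε) (hε1 : ε < 1)
    {n m k t : ℕ} (hm1 : (1 + ε) * n ≤ m) (hm2 : (m : ℝ) ≤ (n : ℝ) ^ 2 / 8) (hk1 : 1 ≤ k)
    (hk2 : (k : ℝ) ≤ Real.exp (-(4 / ε)) / 4 * ((n : ℝ) - 1))
    (ht : t = ⌊(m : ℝ) / n * k⌋₊ + 1) :
    (n.choose k : ℝ) * ((k.choose 2).choose t) * ((n.choose 2).choose (m - t)) ≤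
      243 / 2 * k * (1 / 2) ^ k * (n : ℝ) ^ (-ε) * (n.choose 2).choose m := by
  set α := Real.exp (-(4 / ε)) / 4
  have hk1' : (1 : ℝ) ≤ k := by exact_mod_cast hk1
  have hα0 : 0 < α := by positivity
  have hexp : Real.exp (-(4 / ε)) ≤ 1 / 5 := by
    have h5 : 5 ≤ Real.exp (4 / ε) := by
      linarith [Real.add_one_le_exp (4 / ε), (lt_div_iff₀ hε0).2 (by linarith : 4 * ε < 4)]
    rw [Real.exp_neg]; exact inv_le_of_inv_le₀ (by norm_num) (by simpa using h5)
  have hα : α ≤ 1 / 20 := by simp only [α]; linarith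
  have hn1 : 0 < (n : ℝ) - 1 := by nlinarith
  have hn21 : (21 : ℝ) ≤ n := by nlinarith [mul_le_mul_of_nonneg_right hα hn1.le]
  have hn : 12 ≤ n := by exact_mod_cast (by linarith : (12 : ℝ) ≤ n)
  have hn0 : (0 : ℝ) < n := by linarith
  have hkn : (k : ℝ) ≤ α * n := by nlinarith
  have hm0 : (0 : ℝ) < m := by nlinarith
  have hmn : 1 + ε ≤ (m : ℝ) / n := by rw [le_div_iff₀ hn0]; linarith
  have hkt : (m : ℝ) / n * k < t := by rw [ht]; push_cast; exact Nat.lt_floor_add_one _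
  have htm : t ≤ m := by
    have : ⌊(m : ℝ) / n * k⌋₊ < m := by
      rw [Nat.floor_lt (by positivity)]
      calc (m : ℝ) / n * k < (m : ℝ) / n * n := by
            gcongr; exact_mod_cast (by nlinarith : (k : ℝ) < n)
        _ = m := by field_simp
    omega
  set b : ℝ := 9 * k / (2 * n)
  have hb0 : 0 < b := by positivity
  have hb : b ≤ 9 / 8 * Real.exp (-(4 / ε)) := by
    rw [div_le_iff₀ (by positivity)]; simp only [α] at hkn; linarith
  set ρ : ℝ := 27 / 2 * b ^ ε
  have hρ : ρ ≤ 243 / 4 * k * (n : ℝ) ^ (-ε) := by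
    calc ρ ≤ 27 / 2 * (9 / 2 * k * (n : ℝ) ^ (-ε)) :=
          mul_le_mul_of_nonneg_left (rpow_div_le_mul_rpow_neg hε1.le hk1 n) (by norm_num)
      _ = 243 / 4 * k * (n : ℝ) ^ (-ε) := by ring
  have hpow : ∀ x : ℝ, x ^ k = x ^ (k - 1) * x := fun x ↦ by
    rw [← pow_succ, Nat.sub_add_cancel hk1]
  calc (n.choose k : ℝ) * ((k.choose 2).choose t) * ((n.choose 2).choose (m - t))
      ≤ (3 * n / k) ^ k * b ^ t * (n.choose 2).choose m :=
        choose_mul_choose_mul_choose_le n k m t hk1 hn hm2 hkt.le htm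
    _ ≤ ρ ^ k * (n.choose 2).choose m := by
        gcongr
        rw [show (3 * n / k : ℝ) = 27 / 2 / b by simp only [b]; field_simp; ring]
        exact div_pow_mul_pow_le_mul_rpow_pow (by norm_num) hb0 (by linarith) (by nlinarith)
    _ ≤ (1 / 2) ^ (k - 1) * (243 / 4 * k * (n : ℝ) ^ (-ε)) * (n.choose 2).choose m := by
        rw [hpow ρ]
        have hρ_half : ρ ≤ 1 / 2 := mul_rpow_le_half hε0 hε1.le hb0.le hb
        gcongr
    _ = 243 / 2 * k * (1 / 2) ^ k * (n : ℝ) ^ (-ε) * (n.choose 2).choose m := by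
        rw [hpow]; ring

theorem sum_range_mul_half_pow_le (n : ℕ) : ∑ k ∈ range n, (k : ℝ) * (1 / 2) ^ k ≤ 2 :=
  (sum_le_hasSum _ (fun _ _ ↦ by positivity)
    (hasSum_coe_mul_geometric_of_norm_lt_one (by norm_num))).trans (by norm_num)

theorem card_not_balanced_le {ε : ℝ} (hε0 : 0 < ε) (hε1 : ε < 1) {n m : ℕ}
    (hm1 : (1 + ε) * n ≤ m) (hm2 : (m : ℝ) ≤ (n : ℝ) ^ 2 / 8) :
    (Nat.card {G : SimpleGraph (Fin n) // edgeCount G = m ∧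
        ¬ (∀ X : Finset (Fin n), (X.card : ℝ) ≤ Real.exp (-(4 / ε)) / 4 * ((n : ℝ) - 1) →
            (edgesIn G X : ℝ) ≤ (m : ℝ) / n * X.card)} : ℝ) ≤
      243 * (n : ℝ) ^ (-ε) * (n.choose 2).choose m := by
  classical
  set p : ℕ → Prop := fun k ↦ (k : ℝ) ≤ Real.exp (-(4 / ε)) / 4 * ((n : ℝ) - 1)
  set t : ℕ → ℕ := fun k ↦ ⌊(m : ℝ) / n * k⌋₊ + 1
  have hterm : ∀ k ∈ range (n + 1), (if p k then ((n.choose k * ((k.choose 2).choose (t k) *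
        (n.choose 2).choose (m - t k)) : ℕ) : ℝ) else 0) ≤
      243 / 2 * k * (1 / 2) ^ k * (n : ℝ) ^ (-ε) * (n.choose 2).choose m := by
    intro k _
    split_ifs with hk
    · rcases k.eq_zero_or_pos with rfl | hk1
      · simp [t]
      · push_cast
        rw [← mul_assoc]
        exact choose_mul_choose_mul_choose_le_geometric hε0 hε1 hm1 hm2 hk1 hk rfl
    · positivity
  calc _ ≤ (#{G : SimpleGraph (Fin n) |
          edgeCount G = m ∧ ∃ X : Finset (Fin n), p #X ∧ t #X ≤ edgesIn G X} : ℝ) := by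
        rw [Nat.card_eq_fintype_card, Fintype.card_subtype]
        refine Nat.cast_le.2 (card_le_card fun G hG ↦ ?_)
        obtain ⟨hGm, hG⟩ := (mem_filter.1 hG).2
        push Not at hG
        obtain ⟨X, hX, hlt⟩ := hG
        exact mem_filter.2 ⟨mem_univ G, hGm, X, hX, Nat.floor_lt (by positivity) |>.2 hlt⟩
    _ ≤ ((∑ k ∈ range (n + 1) with p k, n.choose k *
          ((k.choose 2).choose (t k) * (n.choose 2).choose (m - t k)) : ℕ) : ℝ) := by
        exact_mod_cast by simpa using card_edgeCount_exists_edgesIn_le (V := Fin n) m p t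
    _ ≤ ∑ k ∈ range (n + 1),
          243 / 2 * k * (1 / 2) ^ k * (n : ℝ) ^ (-ε) * (n.choose 2).choose m := by
        rw [Nat.cast_sum, sum_filter]
        exact sum_le_sum hterm
    _ = 243 / 2 * (n : ℝ) ^ (-ε) * (n.choose 2).choose m *
          ∑ k ∈ range (n + 1), (k : ℝ) * (1 / 2) ^ k := by
        rw [mul_sum]; congr 1 with k; ring
    _ ≤ 243 / 2 * (n : ℝ) ^ (-ε) * (n.choose 2).choose m * 2 := by
        gcongr; exact sum_range_mul_half_pow_le _
    _ = 243 * (n : ℝ) ^ (-ε) * (n.choose 2).choose m := by ring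

theorem statement_10 (ε : ℝ) (hε0 : 0 < ε) (hε1 : ε < 0.1) :
    ∀ δ : ℝ, 0 < δ → ∃ N : ℕ, ∀ n : ℕ, N ≤ n → ∀ m : ℕ,
      (1 + ε) * n ≤ m → (m : ℝ) ≤ (n : ℝ) ^ 2 / 8 →
      (Nat.card {G : SimpleGraph (Fin n) // edgeCount G = m ∧
          ¬ (∀ X : Finset (Fin n), (X.card : ℝ) ≤ Real.exp (-(4 / ε)) / 4 * ((n : ℝ) - 1) →
              (edgesIn G X : ℝ) ≤ (m : ℝ) / n * X.card)} : ℝ) ≤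
        δ * Nat.card {G : SimpleGraph (Fin n) // edgeCount G = m} := by
  intro δ hδ
  have hlim : Filter.Tendsto (fun n : ℕ ↦ 243 * (n : ℝ) ^ (-ε)) Filter.atTop (nhds 0) := by
    simpa using ((tendsto_rpow_neg_atTop hε0).comp
      tendsto_natCast_atTop_atTop).const_mul (243 : ℝ)
  obtain ⟨N, hN⟩ := Filter.eventually_atTop.1 (hlim.eventually (ge_mem_nhds hδ))
  refine ⟨N, fun n hn m hm1 hm2 ↦ ?_⟩
  rw [card_edgeCount_eq, Fintype.card_fin]
  calc _ ≤ 243 * (n : ℝ) ^ (-ε) * (n.choose 2).choose m :=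
        card_not_balanced_le hε0 (by norm_num at hε1; linarith) hm1 hm2
    _ ≤ δ * (n.choose 2).choose m := by gcongr; exact hN n hn

end TwwPaper
end
end
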